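/- arXiv:1701.04991 — 2 statements merged into one kernel-verified Lean document; each statement's English description precedes it below -/
import Mathlib

section
/- Let μⱼ > 0 for j ≥ N+1, and let ξ ∈ ℝ. For sequences (aⱼ), (bⱼ) defined from given (fⱼ), (gⱼ) by bⱼ = −μⱼ/(μⱼ + ξ²) · (fⱼ + (iξ/μⱼ) gⱼ) and aⱼ = (−iξ/(μⱼ + ξ²)) fⱼ − (1/(μⱼ + ξ²)) gⱼ, there is a constant C depending only on inf_{j>N} μⱼ > 0 such that Σⱼ μⱼ|aⱼ|² + Σⱼ |bⱼ|² ≤ C/(1+ξ²) · (Σⱼ μⱼ|fⱼ|² + Σⱼ |gⱼ|²). In particular the resolvent estimate ‖(B − iξ)⁻¹‖ ≤ C/(1+|ξ|) holds for the associated block operator. -/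
lemma key10 (δ : ℝ) (hδ : 0 < δ) (m : ℝ) (hm : δ ≤ m) (ξ : ℝ) (f g : ℂ) :
    m * ‖(-(Complex.I * (ξ : ℂ)) / ((m : ℂ) + (ξ : ℂ) ^ 2)) * f
        - (1 / ((m : ℂ) + (ξ : ℂ) ^ 2)) * g‖ ^ 2
    + ‖(-(m : ℂ) / ((m : ℂ) + (ξ : ℂ) ^ 2)) * (f + (Complex.I * (ξ : ℂ) / (m : ℂ)) * g)‖ ^ 2
    ≤ (2 * (1 + 1/δ)) / (1 + ξ ^ 2) * (m * ‖f‖ ^ 2 + ‖g‖ ^ 2) := by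
  have hm0 : (0:ℝ) < m := lt_of_lt_of_le hδ hm
  have hD : (0:ℝ) < m + ξ ^ 2 := by positivity
  have hmc : (m : ℂ) ≠ 0 := by exact_mod_cast hm0.ne'
  have hDc : ((m : ℂ) + (ξ:ℂ) ^ 2) = ((m + ξ ^ 2 : ℝ) : ℂ) := by push_cast; ring
  have hDne : ((m + ξ ^ 2 : ℝ) : ℂ) ≠ 0 := by exact_mod_cast hD.ne'
  have hDne' : ((m : ℂ) + (ξ:ℂ) ^ 2) ≠ 0 := hDc ▸ hDne
  have hA : ‖(-(Complex.I * (ξ : ℂ)) / ((m : ℂ) + (ξ : ℂ) ^ 2)) * f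
        - (1 / ((m : ℂ) + (ξ : ℂ) ^ 2)) * g‖ ≤ (|ξ| * ‖f‖ + ‖g‖) / (m + ξ ^ 2) := by
    have heq : (-(Complex.I * (ξ : ℂ)) / ((m : ℂ) + (ξ : ℂ) ^ 2)) * f
        - (1 / ((m : ℂ) + (ξ : ℂ) ^ 2)) * g
        = (-(Complex.I * (ξ:ℂ) * f) - g) / ((m + ξ ^ 2 : ℝ) : ℂ) := by
      rw [← hDc]; field_simp
    rw [heq, norm_div, Complex.norm_real, Real.norm_eq_abs, abs_of_pos hD]
    gcongr
    calc ‖-(Complex.I * (ξ:ℂ) * f) - g‖ ≤ ‖-(Complex.I * (ξ:ℂ) * f)‖ + ‖g‖ := norm_sub_le _ _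
      _ = |ξ| * ‖f‖ + ‖g‖ := by
          rw [norm_neg, norm_mul, norm_mul, Complex.norm_I, Complex.norm_real,
            Real.norm_eq_abs, one_mul]
  have hB : ‖(-(m : ℂ) / ((m : ℂ) + (ξ : ℂ) ^ 2)) * (f + (Complex.I * (ξ : ℂ) / (m : ℂ)) * g)‖
      ≤ (m * ‖f‖ + |ξ| * ‖g‖) / (m + ξ ^ 2) := by
    have heq : (-(m : ℂ) / ((m : ℂ) + (ξ : ℂ) ^ 2)) * (f + (Complex.I * (ξ : ℂ) / (m : ℂ)) * g)
        = (-((m:ℂ) * f) - Complex.I * (ξ:ℂ) * g) / ((m + ξ ^ 2 : ℝ) : ℂ) := by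
      rw [← hDc]; field_simp; ring
    rw [heq, norm_div, Complex.norm_real, Real.norm_eq_abs, abs_of_pos hD]
    gcongr
    calc ‖-((m:ℂ) * f) - Complex.I * (ξ:ℂ) * g‖
        ≤ ‖-((m:ℂ) * f)‖ + ‖Complex.I * (ξ:ℂ) * g‖ := norm_sub_le _ _
      _ = m * ‖f‖ + |ξ| * ‖g‖ := by
          rw [norm_neg, norm_mul, norm_mul, norm_mul, Complex.norm_I, Complex.norm_real,
            Complex.norm_real, Real.norm_eq_abs, Real.norm_eq_abs, one_mul,
            abs_of_pos hm0]
  set A := ‖(-(Complex.I * (ξ : ℂ)) / ((m : ℂ) + (ξ : ℂ) ^ 2)) * f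
        - (1 / ((m : ℂ) + (ξ : ℂ) ^ 2)) * g‖ with hAdef
  set B := ‖(-(m : ℂ) / ((m : ℂ) + (ξ : ℂ) ^ 2)) * (f + (Complex.I * (ξ : ℂ) / (m : ℂ)) * g)‖
  have hA0 : 0 ≤ A := norm_nonneg _
  have hB0 : 0 ≤ B := norm_nonneg _
  have h1 : m * A ^ 2 + B ^ 2 ≤ 2 / (m + ξ ^ 2) * (m * ‖f‖ ^ 2 + ‖g‖ ^ 2) := by
    have hA2 : A ^ 2 ≤ ((|ξ| * ‖f‖ + ‖g‖) / (m + ξ ^ 2)) ^ 2 := by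
      apply pow_le_pow_left₀ hA0 hA
    have hB2 : B ^ 2 ≤ ((m * ‖f‖ + |ξ| * ‖g‖) / (m + ξ ^ 2)) ^ 2 := by
      apply pow_le_pow_left₀ hB0 hB
    have hnum : m * (|ξ| * ‖f‖ + ‖g‖) ^ 2 + (m * ‖f‖ + |ξ| * ‖g‖) ^ 2
        ≤ 2 * (m + ξ ^ 2) * (m * ‖f‖ ^ 2 + ‖g‖ ^ 2) := by
      rw [← sq_abs ξ]
      nlinarith [sq_nonneg (m * ‖f‖ - |ξ| * ‖g‖),
        mul_nonneg hm0.le (sq_nonneg (|ξ| * ‖f‖ - ‖g‖))]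
    calc m * A ^ 2 + B ^ 2
        ≤ (m * (|ξ| * ‖f‖ + ‖g‖) ^ 2 + (m * ‖f‖ + |ξ| * ‖g‖) ^ 2) / (m + ξ ^ 2) ^ 2 := by
          rw [add_div, mul_div_assoc, ← div_pow, ← div_pow]
          gcongr
      _ ≤ (2 * (m + ξ ^ 2) * (m * ‖f‖ ^ 2 + ‖g‖ ^ 2)) / (m + ξ ^ 2) ^ 2 := by gcongr
      _ = 2 / (m + ξ ^ 2) * (m * ‖f‖ ^ 2 + ‖g‖ ^ 2) := by
          field_simp
  refine h1.trans ?_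
  have hcoef : 2 / (m + ξ ^ 2) ≤ (2 * (1 + 1/δ)) / (1 + ξ ^ 2) := by
    rw [div_le_div_iff₀ hD (by positivity)]
    have hd1 : (0:ℝ) < 1/δ := by positivity
    have h2' : 1 ≤ 1/δ * m := by
      rw [mul_comm, mul_one_div]; exact (one_le_div hδ).mpr hm
    nlinarith [h2', hm0, mul_nonneg hd1.le (sq_nonneg ξ)]
  have := mul_le_mul_of_nonneg_right hcoef (by positivity : (0:ℝ) ≤ m * ‖f‖ ^ 2 + ‖g‖ ^ 2)
  linarith

/-- Resolvent estimate in eigenfunction coordinates: with `μⱼ ≥ δ > 0`, the solution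
coefficients `aⱼ, bⱼ` of the model resolvent system satisfy
`Σ μⱼ|aⱼ|² + Σ |bⱼ|² ≤ C/(1+ξ²) (Σ μⱼ|fⱼ|² + Σ |gⱼ|²)` with `C` depending only on `δ`. -/
theorem stmt10 (δ : ℝ) (hδ : 0 < δ) :
    ∃ C > 0, ∀ (μ : ℕ → ℝ), (∀ j, δ ≤ μ j) → ∀ (ξ : ℝ) (f g : ℕ → ℂ),
      Summable (fun j => μ j * ‖f j‖ ^ 2) → Summable (fun j => ‖g j‖ ^ 2) →
      (∑' j, μ j * ‖(-(Complex.I * (ξ : ℂ)) / ((μ j : ℂ) + (ξ : ℂ) ^ 2)) * f j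
          - (1 / ((μ j : ℂ) + (ξ : ℂ) ^ 2)) * g j‖ ^ 2) +
      (∑' j, ‖(-(μ j : ℂ) / ((μ j : ℂ) + (ξ : ℂ) ^ 2)) *
          (f j + (Complex.I * (ξ : ℂ) / (μ j : ℂ)) * g j)‖ ^ 2) ≤
      C / (1 + ξ ^ 2) * ((∑' j, μ j * ‖f j‖ ^ 2) + ∑' j, ‖g j‖ ^ 2) := by
  refine ⟨2 * (1 + 1/δ), by positivity, fun μ hμ ξ f g hf hg => ?_⟩
  set C := 2 * (1 + 1/δ) with hCdef
  set F := fun j => μ j * ‖(-(Complex.I * (ξ : ℂ)) / ((μ j : ℂ) + (ξ : ℂ) ^ 2)) * f j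
          - (1 / ((μ j : ℂ) + (ξ : ℂ) ^ 2)) * g j‖ ^ 2 with hFdef
  set G := fun j => ‖(-(μ j : ℂ) / ((μ j : ℂ) + (ξ : ℂ) ^ 2)) *
          (f j + (Complex.I * (ξ : ℂ) / (μ j : ℂ)) * g j)‖ ^ 2 with hGdef
  set H := fun j => C / (1 + ξ ^ 2) * (μ j * ‖f j‖ ^ 2 + ‖g j‖ ^ 2) with hHdef
  have hkey : ∀ j, F j + G j ≤ H j := fun j => key10 δ hδ (μ j) (hμ j) ξ (f j) (g j)
  have hF0 : ∀ j, 0 ≤ F j := fun j => by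
    have : (0:ℝ) < μ j := lt_of_lt_of_le hδ (hμ j)
    positivity
  have hG0 : ∀ j, 0 ≤ G j := fun j => by positivity
  have hH : Summable H := ((hf.add hg).mul_left _)
  have hF : Summable F := hH.of_nonneg_of_le hF0
    (fun j => le_trans (le_add_of_nonneg_right (hG0 j)) (hkey j))
  have hG : Summable G := hH.of_nonneg_of_le hG0
    (fun j => le_trans (le_add_of_nonneg_left (hF0 j)) (hkey j))
  calc (∑' j, F j) + ∑' j, G j = ∑' j, (F j + G j) := (Summable.tsum_add hF hG).symm
    _ ≤ ∑' j, H j := Summable.tsum_le_tsum hkey (hF.add hG) hH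
    _ = C / (1 + ξ ^ 2) * ((∑' j, μ j * ‖f j‖ ^ 2) + ∑' j, ‖g j‖ ^ 2) := by
        rw [hHdef]
        rw [tsum_mul_left, Summable.tsum_add hf hg]
end

section
/- Let H be a Hilbert space, P, P* orthogonal projections onto closed subspaces, and set P̃* = I − P*. If ‖P − P*‖ < 1, then the operator I − P̃*(P − P*) is invertible on H, and S = (I − P̃*(P − P*))⁻¹ P̃*(P − P*) satisfies ‖S‖ ≤ ‖P − P*‖/(1 − ‖P − P*‖). Moreover the map v ↦ P̃(I + S)v, restricted to ran P̃*, is a bounded inverse of the map ψ ↦ P̃* ψ from ran P̃ to ran P̃*, where P̃ = I − P. -/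
/-!
Write `Q = 1 - P*`, `A = Q (P - P*)` and `T = (1 - A)⁻¹ = 1 + S`. Since `Q` is an orthogonal
projection, `‖A‖ ≤ ‖P - P*‖ < 1`, so `T` is a Neumann series and `S = A + S A` gives the norm
bound. As `Q P* = 0`, we have `1 - A = P* + Q (1 - P)`, and multiplying `(1 - A) T = 1` on the
left by `Q` yields the operator identity `Q (1 - P) T = Q`, which is the second inversion formula.
For the first one, `x = (1 - P) T Q ψ - ψ` lies in `ker P ∩ ran P*` and is therefore fixed by
`P* - P`, a strict contraction, so `x = 0`.
-/

theorem one_add_inverse_one_sub_mul {R : Type*} [Ring R] {a : R} (ha : IsUnit (1 - a)) :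
    1 + Ring.inverse (1 - a) * a = Ring.inverse (1 - a) := by
  calc 1 + Ring.inverse (1 - a) * a
      = Ring.inverse (1 - a) * ((1 - a) + a) := by rw [mul_add, Ring.inverse_mul_cancel _ ha]
    _ = Ring.inverse (1 - a) := by rw [sub_add_cancel, mul_one]

theorem IsIdempotentElem.one_sub_mul_one_sub_mul_eq {R : Type*} [Ring R] {p b t : R}
    (hp : IsIdempotentElem p) (ht : (1 - (1 - p) * (b - p)) * t = 1) :
    (1 - p) * (1 - b) * t = 1 - p := by
  have hq : (1 - p) * (1 - (1 - p) * (b - p)) = (1 - p) * (1 - b) := by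
    have h₁ : (1 - p) * (1 - p) = 1 - p := hp.one_sub.eq
    have h₂ : (1 - p) * p = 0 := hp.one_sub_mul_self
    calc (1 - p) * (1 - (1 - p) * (b - p))
        = (1 - p) - (1 - p) * (1 - p) * b + (1 - p) * (1 - p) * p := by noncomm_ring
      _ = (1 - p) * (1 - b) := by rw [h₁, h₂]; noncomm_ring
  rw [← hq, mul_assoc, ht, mul_one]

theorem NormedRing.norm_inverse_one_sub_mul_le {R : Type*} [NormedRing R] [CompleteSpace R]
    {a : R} (ha : ‖a‖ < 1) :
    ‖Ring.inverse (1 - a) * a‖ ≤ ‖a‖ / (1 - ‖a‖) := by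
  set S := Ring.inverse (1 - a) * a
  have hunit : IsUnit (1 - a) := (Units.oneSub a ha).isUnit
  have hS : S = a + S * a := by
    have : S * (1 - a) = a := by
      rw [mul_assoc, ← ((Commute.one_left a).sub_left (Commute.refl a)).eq, ← mul_assoc,
        Ring.inverse_mul_cancel _ hunit, one_mul]
    rw [mul_sub, mul_one] at this
    exact eq_add_of_sub_eq this
  have hb : ‖S‖ ≤ ‖a‖ + ‖S‖ * ‖a‖ :=
    calc ‖S‖ = ‖a + S * a‖ := by rw [← hS]
      _ ≤ ‖a‖ + ‖S‖ * ‖a‖ := (norm_add_le _ _).trans (by gcongr; exact norm_mul_le _ _)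
  rw [le_div_iff₀ (by linarith)]
  linarith

theorem ContinuousLinearMap.eq_zero_of_apply_eq_zero_of_apply_eq_self {𝕜 E : Type*}
    [NontriviallyNormedField 𝕜] [NormedAddCommGroup E] [NormedSpace 𝕜 E] {P Ps : E →L[𝕜] E}
    (h : ‖P - Ps‖ < 1) {x : E} (hP : P x = 0) (hPs : Ps x = x) : x = 0 := by
  have hle : ‖x‖ ≤ ‖P - Ps‖ * ‖x‖ :=
    calc ‖x‖ = ‖(P - Ps) x‖ := by rw [sub_apply, hP, hPs, zero_sub, norm_neg]
      _ ≤ ‖P - Ps‖ * ‖x‖ := le_opNorm _ _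
  exact norm_le_zero_iff.mp (by nlinarith [norm_nonneg x])

theorem stmt17_general {𝕜 : Type*} [RCLike 𝕜] {H : Type*} [NormedAddCommGroup H]
    [InnerProductSpace 𝕜 H] [CompleteSpace H]
    (P Ps : H →L[𝕜] H)
    (hPidem : IsIdempotentElem P) (hPsidem : IsIdempotentElem Ps)
    (hPssa : IsSelfAdjoint Ps)
    (hsmall : ‖P - Ps‖ < 1) :
    IsUnit (1 - (1 - Ps) * (P - Ps)) ∧
    ∀ S : H →L[𝕜] H,
      S = Ring.inverse (1 - (1 - Ps) * (P - Ps)) * ((1 - Ps) * (P - Ps)) →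
      ‖S‖ ≤ ‖P - Ps‖ / (1 - ‖P - Ps‖) ∧
      (∀ ψ : H, P ψ = 0 → (1 - P) ((1 + S) ((1 - Ps) ψ)) = ψ) ∧
      (∀ v : H, Ps v = 0 → (1 - Ps) ((1 - P) ((1 + S) v)) = v) := by
  set A := (1 - Ps) * (P - Ps)
  have hA : ‖A‖ ≤ ‖P - Ps‖ :=
    (norm_mul_le _ _).trans <| mul_le_of_le_one_left (norm_nonneg _)
      (IsStarProjection.one_sub ⟨hPsidem, hPssa⟩).norm_le
  have hA1 : ‖A‖ < 1 := hA.trans_lt hsmall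
  have hunit : IsUnit (1 - A) := (Units.oneSub A hA1).isUnit
  refine ⟨hunit, fun S hS => ?_⟩
  have hT : 1 + S = Ring.inverse (1 - A) := hS ▸ one_add_inverse_one_sub_mul hunit
  have hQT : (1 - Ps) * (1 - P) * (1 + S) = 1 - Ps :=
    hPsidem.one_sub_mul_one_sub_mul_eq (hT ▸ Ring.mul_inverse_cancel _ hunit)
  have hback (v : H) : (1 - Ps) ((1 - P) ((1 + S) v)) = (1 - Ps) v :=
    congr($hQT v)
  refine ⟨?_, fun ψ hψ => ?_, fun v hv => ?_⟩
  · refine (hS ▸ NormedRing.norm_inverse_one_sub_mul_le hA1).trans ?_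
    exact div_le_div₀ (norm_nonneg _) hA (by linarith) (by linarith)
  · have hPφ : P ((1 - P) ((1 + S) ((1 - Ps) ψ))) = 0 := by
      rw [← mul_apply_eq_comp, hPidem.mul_one_sub_self, zero_apply]
    have hQφ : (1 - Ps) ((1 - P) ((1 + S) ((1 - Ps) ψ))) = (1 - Ps) ψ := by
      rw [hback, ← mul_apply_eq_comp, hPsidem.one_sub.eq]
    rw [← sub_eq_zero]
    refine ContinuousLinearMap.eq_zero_of_apply_eq_zero_of_apply_eq_self hsmall
      (by rw [map_sub, hPφ, hψ, sub_zero]) ?_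
    have hQx := sub_eq_zero.mpr hQφ
    rwa [← map_sub, sub_apply, one_apply_eq_self, sub_eq_zero, eq_comm] at hQx
  · rw [hback, sub_apply, one_apply_eq_self, hv, sub_zero]

/-- Inversion of the projection change of variables: if `‖P − P*‖ < 1` then
`I − P̃*(P − P*)` is invertible, `S = (I − P̃*(P − P*))⁻¹ P̃*(P − P*)` satisfies the norm
bound `‖S‖ ≤ ‖P − P*‖/(1 − ‖P − P*‖)`, and `v ↦ P̃(I+S)v` inverts `ψ ↦ P̃*ψ` between
`ran P̃` and `ran P̃*`. -/
theorem stmt17 {𝕜 : Type*} [RCLike 𝕜] {H : Type*} [NormedAddCommGroup H]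
    [InnerProductSpace 𝕜 H] [CompleteSpace H]
    (P Ps : H →L[𝕜] H)
    (hPidem : IsIdempotentElem P) (hPsidem : IsIdempotentElem Ps)
    (hPsa : IsSelfAdjoint P) (hPssa : IsSelfAdjoint Ps)
    (hsmall : ‖P - Ps‖ < 1) :
    IsUnit (1 - (1 - Ps) * (P - Ps)) ∧
    ∀ S : H →L[𝕜] H,
      S = Ring.inverse (1 - (1 - Ps) * (P - Ps)) * ((1 - Ps) * (P - Ps)) →
      ‖S‖ ≤ ‖P - Ps‖ / (1 - ‖P - Ps‖) ∧
      (∀ ψ : H, P ψ = 0 → (1 - P) ((1 + S) ((1 - Ps) ψ)) = ψ) ∧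
      (∀ v : H, Ps v = 0 → (1 - Ps) ((1 - P) ((1 + S) v)) = v) :=
  stmt17_general P Ps hPidem hPsidem hPssa hsmall
end
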